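/- arXiv:2011.02251 — 7 statements merged into one kernel-verified Lean document; each statement's English description precedes it below -/
import Mathlib

section
/- Let X be a Banach space and T a bounded linear operator on X. If there exists a sequence of nonnegative reals a_k → 0 with the property that for each x ∈ X there exists c ≥ 0 such that ‖T^k x‖ ≤ c·a_k for all k ∈ ℤ₊, then ‖T^k‖ → 0 as k → ∞. -/
open Filter

/-- If the orbits of a bounded operator `T` on a Banach space decay with a common
rate `a_k → 0` (each orbit dominated by `c · a_k`), then `‖T^k‖ → 0`. -/
theorem opNorm_tendsto_zero_of_pointwise_rate
    {X : Type*} [NormedAddCommGroup X] [NormedSpace ℝ X] [CompleteSpace X]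
    (T : X →L[ℝ] X) (a : ℕ → ℝ) (ha_nonneg : ∀ k, 0 ≤ a k)
    (ha_lim : Tendsto a atTop (nhds 0))
    (h : ∀ x : X, ∃ c : ℝ, 0 ≤ c ∧ ∀ k : ℕ, ‖(T ^ k) x‖ ≤ c * a k) :
    Tendsto (fun k : ℕ => ‖T ^ k‖) atTop (nhds 0) := by
  set g : ℕ → X →L[ℝ] X := fun k => (a k)⁻¹ • T ^ k with hg
  have hpt : ∀ x : X, ∃ C : ℝ, ∀ k : ℕ, ‖g k x‖ ≤ C := by
    intro x
    obtain ⟨c, hc0, hc⟩ := h x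
    refine ⟨c, fun k => ?_⟩
    simp only [hg, ContinuousLinearMap.smul_apply, norm_smul, norm_inv, Real.norm_eq_abs,
      abs_of_nonneg (ha_nonneg k)]
    rcases eq_or_lt_of_le (ha_nonneg k) with h0 | h0
    · simp [← h0]; exact hc0
    · rw [inv_mul_le_iff₀ h0]
      calc ‖(T ^ k) x‖ ≤ c * a k := hc k
        _ = a k * c := mul_comm _ _
  obtain ⟨C, hC⟩ := banach_steinhaus hpt
  have hbound : ∀ k, ‖T ^ k‖ ≤ C * a k := by
    intro k
    rcases eq_or_lt_of_le (ha_nonneg k) with h0 | h0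
    · have hz : T ^ k = 0 := by
        ext x
        obtain ⟨c, hc0, hc⟩ := h x
        have := hc k
        rw [← h0, mul_zero] at this
        simpa using le_antisymm this (norm_nonneg _)
      simp [hz, ← h0]
    · have : T ^ k = a k • g k := by
        simp [hg, smul_smul, mul_inv_cancel₀ h0.ne']
      rw [this]
      calc ‖a k • g k‖ ≤ |a k| * ‖g k‖ := by simpa [Real.norm_eq_abs] using norm_smul_le (a k) (g k)
        _ = a k * ‖g k‖ := by rw [abs_of_nonneg (ha_nonneg k)]
        _ ≤ a k * C := by exact mul_le_mul_of_nonneg_left (hC k) (ha_nonneg k)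
        _ = C * a k := mul_comm _ _
  have hlim : Tendsto (fun k => C * a k) atTop (nhds 0) := by
    simpa using ha_lim.const_mul C
  exact squeeze_zero (fun k => norm_nonneg _) hbound hlim
end

section
/- Let (X, X⁺) be an ordered Banach space with generating cone, let M > 0 be a constant such that every x ∈ X decomposes as x = y − z with y, z ∈ X⁺ and ‖y‖, ‖z‖ ≤ M‖x‖, and let T ∈ L(X) be positive. If there exists c ≥ 0 such that for all x, y ∈ X⁺ the inequality (I − T)x ≤ y implies ‖x‖ ≤ c‖y‖, then dist((T − I)x, X⁺) ≥ (1/(cM))‖x‖ for all x ∈ X⁺. -/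
/-- Monotone bounded invertibility implies the uniform small-gain condition:
if `(I − T)x ≤ y` (for `x, y` in the cone) implies `‖x‖ ≤ c‖y‖`, then
`dist((T − I)x, K) ≥ ‖x‖/(cM)` for all `x` in the cone `K`. -/
theorem uniform_small_gain_of_mbi
    {X : Type*} [NormedAddCommGroup X] [NormedSpace ℝ X] [CompleteSpace X]
    (K : Set X) (hclosed : IsClosed K)
    (hadd : ∀ x ∈ K, ∀ y ∈ K, x + y ∈ K)
    (hsmul : ∀ (a : ℝ), 0 ≤ a → ∀ x ∈ K, a • x ∈ K)
    (hpointed : K ∩ (-K) = {0})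
    (M : ℝ) (hM : 0 < M)
    (hgen : ∀ x : X, ∃ y ∈ K, ∃ z ∈ K, x = y - z ∧ ‖y‖ ≤ M * ‖x‖ ∧ ‖z‖ ≤ M * ‖x‖)
    (T : X →L[ℝ] X) (hT : ∀ x ∈ K, T x ∈ K)
    (c : ℝ) (hc : 0 ≤ c)
    (hmbi : ∀ x ∈ K, ∀ y ∈ K, y - (x - T x) ∈ K → ‖x‖ ≤ c * ‖y‖) :
    ∀ x ∈ K, (1 / (c * M)) * ‖x‖ ≤ Metric.infDist (T x - x) K := by
  intro x hx
  have h0K : (0 : X) ∈ K := by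
    have : (0 : X) ∈ K ∩ (-K) := by rw [hpointed]; rfl
    exact this.1
  rcases eq_or_lt_of_le hc with hc0 | hcpos
  · -- c = 0 case
    have hx0 : ‖x‖ ≤ 0 := by
      have h2 : x + T x - (x - T x) ∈ K := by
        have := hsmul 2 (by norm_num) (T x) (hT x hx)
        have e : x + T x - (x - T x) = (2:ℝ) • T x := by
          rw [two_smul]; abel
        rw [e]; exact this
      have := hmbi x hx (x + T x) (hadd x hx (T x) (hT x hx)) h2
      simpa [← hc0] using this
    have : x = 0 := by simpa using le_antisymm hx0 (norm_nonneg x)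
    simp [this, Metric.infDist_nonneg]
  · rw [← not_lt]
    intro hlt
    obtain ⟨y, hy, hylt⟩ := (Metric.infDist_lt_iff ⟨0, h0K⟩).1 hlt
    rw [dist_eq_norm] at hylt
    set d := T x - x - y with hd
    obtain ⟨p, hp, q, hq, hpq, hpn, -⟩ := hgen (-d)
    -- p - (x - T x) = q + y ∈ K
    have hdom : p - (x - T x) ∈ K := by
      have hp' : p = -d + q := by
        have := hpq.symm
        rw [sub_eq_iff_eq_add'] at this
        rw [this]; abel
      have heq : p - (x - T x) = q + y := by
        rw [hp', hd]; abel
      rw [heq]; exact hadd q hq y hy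
    have hkey : ‖x‖ ≤ c * ‖p‖ := hmbi x hx p hp hdom
    have h2 : ‖p‖ ≤ M * ‖d‖ := by simpa using hpn
    have : ‖x‖ ≤ c * M * ‖d‖ := by
      calc ‖x‖ ≤ c * ‖p‖ := hkey
        _ ≤ c * (M * ‖d‖) := by exact mul_le_mul_of_nonneg_left h2 hc
        _ = c * M * ‖d‖ := by ring
    have hcM : 0 < c * M := mul_pos hcpos hM
    rw [div_mul_eq_mul_div, one_mul, lt_div_iff₀ hcM] at hylt
    nlinarith
end

section
/- Let (X, X⁺) be an ordered Banach space with total cone and let M' > 0 be such that every functional x' ∈ X' decomposes as x' = z' − y' with z', y' positive functionals of norm at most M'‖x'‖. Then for each x ∈ X⁺ of norm 1 there exists a positive functional z' ∈ (X')⁺ with ‖z'‖ ≤ M' and ⟨z', x⟩ ≥ 1. -/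
theorem exists_positive_functional_norming_general
    {X : Type*} [NormedAddCommGroup X] [NormedSpace ℝ X]
    (K : Set X)
    (M' : ℝ)
    (hdecomp : ∀ f : X →L[ℝ] ℝ, ∃ z' y' : X →L[ℝ] ℝ,
      (∀ v ∈ K, 0 ≤ z' v) ∧ (∀ v ∈ K, 0 ≤ y' v) ∧ f = z' - y' ∧
      ‖z'‖ ≤ M' * ‖f‖ ∧ ‖y'‖ ≤ M' * ‖f‖) :
    ∀ x ∈ K, ‖x‖ = 1 →
      ∃ z' : X →L[ℝ] ℝ, (∀ v ∈ K, 0 ≤ z' v) ∧ ‖z'‖ ≤ M' ∧ 1 ≤ z' x := by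
  intro x hx hx_norm
  -- Hahn–Banach gives a norming functional `f`; its positive part `z'` dominates it on the cone.
  obtain ⟨f, hf_norm, hf_x⟩ := exists_dual_vector ℝ x (by rw [hx_norm]; exact one_ne_zero)
  obtain ⟨z', y', hz'_pos, hy'_pos, rfl, hz'_norm, -⟩ := hdecomp f
  refine ⟨z', hz'_pos, by simpa [hf_norm] using hz'_norm, ?_⟩
  have hdiff : z' x - y' x = 1 := by simpa [hx_norm] using hf_x
  linarith [hy'_pos x hx]

/-- If every functional on `X` decomposes as a difference of positive functionals
of norm at most `M'` times the original norm, then every unit vector in the cone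
is normed by some positive functional of norm at most `M'`. -/
theorem exists_positive_functional_norming
    {X : Type*} [NormedAddCommGroup X] [NormedSpace ℝ X] [CompleteSpace X]
    (K : Set X) (hclosed : IsClosed K)
    (hadd : ∀ x ∈ K, ∀ y ∈ K, x + y ∈ K)
    (hsmul : ∀ (a : ℝ), 0 ≤ a → ∀ x ∈ K, a • x ∈ K)
    (hpointed : K ∩ (-K) = {0})
    (htotal : Dense {x : X | ∃ y ∈ K, ∃ z ∈ K, x = y - z})
    (M' : ℝ) (hM' : 0 < M')
    (hdecomp : ∀ f : X →L[ℝ] ℝ, ∃ z' y' : X →L[ℝ] ℝ,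
      (∀ v ∈ K, 0 ≤ z' v) ∧ (∀ v ∈ K, 0 ≤ y' v) ∧ f = z' - y' ∧
      ‖z'‖ ≤ M' * ‖f‖ ∧ ‖y'‖ ≤ M' * ‖f‖) :
    ∀ x ∈ K, ‖x‖ = 1 →
      ∃ z' : X →L[ℝ] ℝ, (∀ v ∈ K, 0 ≤ z' v) ∧ ‖z'‖ ≤ M' ∧ 1 ≤ z' x :=
  exists_positive_functional_norming_general K M' hdecomp
end

section
/- Let (X, X⁺) be an ordered Banach space with normal cone whose interior is nonempty, and let T ∈ L(X) be positive. If there exists an interior point z of X⁺ and λ ∈ (0,1) with Tz ≤ λz, then T^n x → 0 for every x ∈ X (strong stability). -/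
open Filter

/-- If a positive operator `T` on an ordered Banach space with normal cone
admits an interior point `z` of the cone with `Tz ≤ λz` for some `λ ∈ (0,1)`,
then the system `x(k+1) = Tx(k)` is strongly stable: `T^n x → 0` for all `x`. -/
theorem strong_stability_of_strict_decay_point
    {X : Type*} [NormedAddCommGroup X] [NormedSpace ℝ X] [CompleteSpace X]
    (K : Set X) (hclosed : IsClosed K)
    (hadd : ∀ x ∈ K, ∀ y ∈ K, x + y ∈ K)
    (hsmul : ∀ (a : ℝ), 0 ≤ a → ∀ x ∈ K, a • x ∈ K)
    (hpointed : K ∩ (-K) = {0})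
    (C : ℝ) (hnormal : ∀ x y : X, x ∈ K → y - x ∈ K → ‖x‖ ≤ C * ‖y‖)
    (hint : (interior K).Nonempty)
    (T : X →L[ℝ] X) (hT : ∀ x ∈ K, T x ∈ K)
    (z : X) (hz : z ∈ interior K)
    (lam : ℝ) (hlam0 : 0 < lam) (hlam1 : lam < 1)
    (hdecay : lam • z - T z ∈ K) :
    ∀ x : X, Tendsto (fun n : ℕ => (T ^ n) x) atTop (nhds 0) := by
  intro x
  -- 0 ∈ K
  have hzK : z ∈ K := interior_subset hz
  have h0K : (0 : X) ∈ K := by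
    have := hsmul 0 le_rfl z hzK
    simpa using this
  -- ball around z inside K
  obtain ⟨ε, hε, hball⟩ := Metric.mem_nhds_iff.mp (mem_interior_iff_mem_nhds.mp hz)
  -- case split on triviality
  rcases subsingleton_or_nontrivial X with hX | hX
  · have : (fun n : ℕ => (T ^ n) x) = fun _ => 0 := by
      funext n; exact Subsingleton.elim _ _
    rw [this]; exact tendsto_const_nhds
  -- z ≠ 0
  have hzne : z ≠ 0 := by
    intro h
    subst h
    obtain ⟨w, hw⟩ := exists_ne (0 : X)
    have hwK : ∀ v : X, v ∈ K := by
      intro v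
      rcases eq_or_ne v 0 with rfl | hv
      · exact h0K
      · have h1 : (ε / 2 / ‖v‖) • v ∈ K := by
          apply hball
          simp only [Metric.mem_ball, dist_zero_right, norm_smul, Real.norm_eq_abs]
          rw [abs_of_nonneg (by positivity)]
          rw [div_mul_cancel₀ _ (norm_ne_zero_iff.mpr hv)]
          linarith
        have hv' : ‖v‖ ≠ 0 := norm_ne_zero_iff.mpr hv
        have h2 := hsmul (‖v‖ / (ε / 2)) (by positivity) _ h1
        have hq : (‖v‖ / (ε / 2)) * (ε / 2 / ‖v‖) = 1 := by
          field_simp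
        rwa [smul_smul, hq, one_smul] at h2
    have : w ∈ K ∩ (-K) := ⟨hwK w, by simpa using hwK (-w)⟩
    rw [hpointed] at this
    exact hw this
  have hC1 : (1 : ℝ) ≤ C := by
    have := hnormal z z hzK (by simpa using h0K)
    have hzpos : 0 < ‖z‖ := norm_pos_iff.mpr hzne
    nlinarith
  have hC0 : 0 ≤ C := le_trans zero_le_one hC1
  -- T^n maps K to K
  have hTn : ∀ n : ℕ, ∀ v ∈ K, (T ^ n) v ∈ K := by
    intro n
    induction n with
    | zero => intro v hv; simpa using hv
    | succ n ih =>
      intro v hv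
      rw [pow_succ]
      exact ih _ (hT v hv)
  -- T^n z ≤ lam^n z
  have hzn : ∀ n : ℕ, lam ^ n • z - (T ^ n) z ∈ K := by
    intro n
    induction n with
    | zero => simpa using h0K
    | succ n ih =>
      have key : lam ^ (n+1) • z - (T ^ (n+1)) z
          = T (lam ^ n • z - (T ^ n) z) + lam ^ n • (lam • z - T z) := by
        rw [pow_succ' T n]
        simp only [ContinuousLinearMap.mul_apply, map_sub, map_smul]
        module
      rw [key]
      exact hadd _ (hT _ ih) _ (hsmul _ (by positivity) _ hdecay)
  -- norm bound for T^n z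
  have hnzn : ∀ n : ℕ, ‖(T ^ n) z‖ ≤ C * (lam ^ n * ‖z‖) := by
    intro n
    have := hnormal _ _ (hTn n z hzK) (hzn n)
    calc ‖(T ^ n) z‖ ≤ C * ‖lam ^ n • z‖ := this
      _ = C * (lam ^ n * ‖z‖) := by
          rw [norm_smul, Real.norm_eq_abs, abs_of_nonneg (by positivity)]
  -- order bounds for x
  set M : ℝ := ‖x‖ / ε + 1 with hM
  have hM0 : 0 < M := by positivity
  have hMε : ‖x‖ < M * ε := by
    rw [hM, add_mul, div_mul_cancel₀ _ (ne_of_gt hε)]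
    linarith
  have hmem : ∀ s : ℝ, |s| = 1 → M • z + s • x ∈ K := by
    intro s hs
    have h1 : z + (s / M) • x ∈ K := by
      apply hball
      simp only [Metric.mem_ball, dist_self_add_left, norm_smul, Real.norm_eq_abs,
        abs_div, hs, abs_of_pos hM0]
      calc 1 / M * ‖x‖ < 1 / M * (M * ε) := by
            apply mul_lt_mul_of_pos_left hMε (by positivity)
        _ = ε := by field_simp

    have h2 := hsmul M (le_of_lt hM0) _ h1
    rwa [smul_add, smul_smul, mul_div_cancel₀ _ (ne_of_gt hM0)] at h2
  have hmem1 : M • z + x ∈ K := by simpa using hmem 1 (by norm_num)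
  have hmem2 : M • z - x ∈ K := by
    have := hmem (-1) (by norm_num)
    simpa [sub_eq_add_neg] using this
  -- key norm bound for T^n x
  have hbound : ∀ n : ℕ, ‖(T ^ n) x‖ ≤ (2 * C + 1) * M * (C * ‖z‖) * lam ^ n := by
    intro n
    have hA : (T ^ n) (M • z + x) ∈ K := hTn n _ hmem1
    have hB : (2 * M) • (T ^ n) z - (T ^ n) (M • z + x) ∈ K := by
      have : (2 * M) • (T ^ n) z - (T ^ n) (M • z + x) = (T ^ n) (M • z - x) := by
        simp only [map_add, map_sub, map_smul]
        module
      rw [this]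
      exact hTn n _ hmem2
    have h1 : ‖(T ^ n) (M • z + x)‖ ≤ C * ‖(2 * M) • (T ^ n) z‖ := hnormal _ _ hA hB
    have h2 : ‖(2 * M) • (T ^ n) z‖ = 2 * M * ‖(T ^ n) z‖ := by
      rw [norm_smul, Real.norm_eq_abs, abs_of_pos (by positivity)]
    have h3 : ‖(T ^ n) x‖ ≤ ‖(T ^ n) (M • z + x)‖ + M * ‖(T ^ n) z‖ := by
      have : (T ^ n) x = (T ^ n) (M • z + x) - M • (T ^ n) z := by
        simp only [map_add, map_smul]
        abel
      rw [this]
      calc ‖(T ^ n) (M • z + x) - M • (T ^ n) z‖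
          ≤ ‖(T ^ n) (M • z + x)‖ + ‖M • (T ^ n) z‖ := norm_sub_le _ _
        _ = ‖(T ^ n) (M • z + x)‖ + M * ‖(T ^ n) z‖ := by
            rw [norm_smul, Real.norm_eq_abs, abs_of_pos hM0]
    have h4 : ‖(T ^ n) z‖ ≤ C * (lam ^ n * ‖z‖) := hnzn n
    have h5 : (2 * C + 1) * M * ‖(T ^ n) z‖ ≤ (2 * C + 1) * M * (C * (lam ^ n * ‖z‖)) := by
      apply mul_le_mul_of_nonneg_left h4 (by positivity)
    calc ‖(T ^ n) x‖ ≤ ‖(T ^ n) (M • z + x)‖ + M * ‖(T ^ n) z‖ := h3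
      _ ≤ C * (2 * M * ‖(T ^ n) z‖) + M * ‖(T ^ n) z‖ := by rw [← h2]; linarith
      _ = (2 * C + 1) * M * ‖(T ^ n) z‖ := by ring
      _ ≤ (2 * C + 1) * M * (C * (lam ^ n * ‖z‖)) := h5
      _ = (2 * C + 1) * M * (C * ‖z‖) * lam ^ n := by ring
  -- conclude
  have htend : Tendsto (fun n : ℕ => (2 * C + 1) * M * (C * ‖z‖) * lam ^ n)
      atTop (nhds 0) := by
    have := tendsto_pow_atTop_nhds_zero_of_lt_one (le_of_lt hlam0) hlam1
    simpa using this.const_mul ((2 * C + 1) * M * (C * ‖z‖))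
  rw [← tendsto_zero_iff_norm_tendsto_zero.symm]
  exact squeeze_zero (fun n => norm_nonneg _) hbound htend
end

section
/- Let (X, X⁺) be an ordered Banach space with normal cone with nonempty interior, and let T ∈ L(X) be positive. If for each x ∈ X⁺ one has inf_{k≥0} ‖T^k x‖ = 0, then there exists k ∈ ℤ₊ with ‖T^k‖ ≤ 1/2; in particular ‖T^n‖ → 0 as n → ∞. -/
open Filter

private lemma norm_pow_mul_le' {A : Type*} [NormedRing A] (a b : A) (m : ℕ) :
    ‖a ^ m * b‖ ≤ ‖a‖ ^ m * ‖b‖ := by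
  induction m with
  | zero => simp
  | succ m ih =>
    calc ‖a ^ (m + 1) * b‖ = ‖a * (a ^ m * b)‖ := by rw [pow_succ', mul_assoc]
    _ ≤ ‖a‖ * ‖a ^ m * b‖ := norm_mul_le _ _
    _ ≤ ‖a‖ * (‖a‖ ^ m * ‖b‖) := mul_le_mul_of_nonneg_left ih (norm_nonneg a)
    _ = ‖a‖ ^ (m + 1) * ‖b‖ := by ring

private lemma aux_tendsto_of_pow_le {X : Type*} [NormedAddCommGroup X] [NormedSpace ℝ X]
    (T : X →L[ℝ] X) (k : ℕ) (hk : 0 < k) (h : ‖T ^ k‖ ≤ 1 / 2) :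
    Tendsto (fun n : ℕ => ‖T ^ n‖) atTop (nhds 0) := by
  set M := (‖T‖ + 1) ^ k with hM
  have hM1 : (1 : ℝ) ≤ ‖T‖ + 1 := by linarith [norm_nonneg T]
  have hone : ‖(1 : X →L[ℝ] X)‖ ≤ 1 := by
    rw [ContinuousLinearMap.one_def]; exact ContinuousLinearMap.norm_id_le
  have hbound : ∀ n : ℕ, ‖T ^ n‖ ≤ (1 / 2 : ℝ) ^ (n / k) * M := by
    intro n
    have h1 : T ^ n = (T ^ k) ^ (n / k) * T ^ (n % k) := by
      rw [← pow_mul, ← pow_add, Nat.div_add_mod]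
    have hrem : ‖T ^ (n % k)‖ ≤ M := by
      have hlt : n % k ≤ k := le_of_lt (Nat.mod_lt _ hk)
      have : ‖T ^ (n % k)‖ ≤ (‖T‖ + 1) ^ (n % k) := by
        rcases Nat.eq_zero_or_pos (n % k) with h0 | h0
        · rw [h0]; simpa using hone
        · calc ‖T ^ (n % k)‖ ≤ ‖T‖ ^ (n % k) := norm_pow_le' T h0
          _ ≤ (‖T‖ + 1) ^ (n % k) :=
            pow_le_pow_left₀ (norm_nonneg T) (by linarith) _
      exact this.trans (pow_le_pow_right₀ hM1 hlt)
    rw [h1]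
    calc ‖(T ^ k) ^ (n / k) * T ^ (n % k)‖ ≤ ‖T ^ k‖ ^ (n / k) * ‖T ^ (n % k)‖ :=
        norm_pow_mul_le' _ _ _
    _ ≤ (1 / 2 : ℝ) ^ (n / k) * M := by
        apply mul_le_mul (pow_le_pow_left₀ (norm_nonneg _) h _) hrem (norm_nonneg _)
        positivity
  apply squeeze_zero (fun n => norm_nonneg _) hbound
  have h2 : Tendsto (fun m : ℕ => ((1 : ℝ) / 2) ^ m * M) atTop (nhds 0) := by
    have := (tendsto_pow_atTop_nhds_zero_of_lt_one (by norm_num : (0:ℝ) ≤ 1/2)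
      (by norm_num : (1:ℝ)/2 < 1)).mul_const M
    simpa using this
  have h3 : Tendsto (fun n : ℕ => n / k) atTop atTop := by
    apply tendsto_atTop_atTop.2
    intro b
    exact ⟨b * k, fun n hn => (Nat.le_div_iff_mul_le hk).2 hn⟩
  exact h2.comp h3

/-- If a positive operator on an ordered Banach space with normal cone with
nonempty interior is weakly attractive on the cone (`inf_k ‖T^k x‖ = 0` for all
`x` in the cone), then `‖T^k‖ ≤ 1/2` for some `k`, and `‖T^n‖ → 0`. -/
theorem uniform_stability_of_weak_attractivity_on_cone
    {X : Type*} [NormedAddCommGroup X] [NormedSpace ℝ X] [CompleteSpace X]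
    (K : Set X) (hclosed : IsClosed K)
    (hadd : ∀ x ∈ K, ∀ y ∈ K, x + y ∈ K)
    (hsmul : ∀ (a : ℝ), 0 ≤ a → ∀ x ∈ K, a • x ∈ K)
    (hpointed : K ∩ (-K) = {0})
    (C : ℝ) (hnormal : ∀ x y : X, x + y ∈ K → y - x ∈ K → ‖x‖ ≤ C * ‖y‖)
    (hint : (interior K).Nonempty)
    (T : X →L[ℝ] X) (hT : ∀ x ∈ K, T x ∈ K)
    (hweak : ∀ x ∈ K, (⨅ k : ℕ, ‖(T ^ k) x‖) = 0) :
    (∃ k : ℕ, ‖T ^ k‖ ≤ 1 / 2) ∧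
      Tendsto (fun n : ℕ => ‖T ^ n‖) atTop (nhds 0) := by
  obtain ⟨z, hz⟩ := hint
  have hzK : z ∈ K := interior_subset hz
  rw [mem_interior_iff_mem_nhds] at hz
  obtain ⟨ε, hε, hball⟩ := Metric.mem_nhds_iff.1 hz
  by_cases hz0 : z = 0
  · -- degenerate case: X is trivial
    have hall : ∀ x : X, x = 0 := by
      intro x
      set c : ℝ := ε / (2 * (‖x‖ + 1)) with hc
      have hcpos : 0 < c := by positivity
      have hnx : ‖x‖ < 2 * (‖x‖ + 1) := by linarith [norm_nonneg x]
      have hcx : ‖c • x‖ < ε := by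
        rw [norm_smul, Real.norm_of_nonneg hcpos.le, hc, div_mul_eq_mul_div,
          div_lt_iff₀ (by positivity)]
        nlinarith [norm_nonneg x]
      have h1 : c • x ∈ K := by
        apply hball; rw [hz0]; simpa [Metric.mem_ball, dist_eq_norm] using hcx
      have h2 : -(c • x) ∈ K := by
        apply hball; rw [hz0]
        simpa [Metric.mem_ball, dist_eq_norm] using hcx
      have : c • x ∈ K ∩ (-K) := ⟨h1, by simpa [Set.mem_neg] using h2⟩
      rw [hpointed] at this
      have hcx0 : c • x = 0 := this
      rcases smul_eq_zero.1 hcx0 with h | h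
      · exact absurd h (ne_of_gt hcpos)
      · exact h
    have hSzero : ∀ S : X →L[ℝ] X, S = 0 := by
      intro S; ext x; simp [hall (S x)]
    constructor
    · exact ⟨0, by rw [hSzero (T ^ 0), norm_zero]; norm_num⟩
    · have : (fun n : ℕ => ‖T ^ n‖) = fun _ => 0 := by
        funext n; rw [hSzero (T ^ n), norm_zero]
      rw [this]; exact tendsto_const_nhds
  · -- main case
    have hzpos : 0 < ‖z‖ := norm_pos_iff.2 hz0
    have h0K : (0 : X) ∈ K := by
      have := hsmul 0 le_rfl z hzK; simpa using this
    have hC : 1 ≤ C := by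
      have h1 := hnormal z z (hadd z hzK z hzK) (by simpa using h0K)
      nlinarith
    have hCpos : 0 < C := lt_of_lt_of_le one_pos hC
    -- positivity of powers
    have hTk : ∀ n : ℕ, ∀ x ∈ K, (T ^ n) x ∈ K := by
      intro n
      induction n with
      | zero => intro x hx; simpa using hx
      | succ n ih =>
        intro x hx
        rw [pow_succ, ContinuousLinearMap.mul_apply]
        exact ih _ (hT x hx)
    -- pick k with ‖T^k z‖ small
    set δ : ℝ := ε / (4 * C) with hδ
    have hδpos : 0 < δ := by positivity
    have hk : ∃ k : ℕ, ‖(T ^ k) z‖ < δ := by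
      by_contra hcon
      push_neg at hcon
      have : δ ≤ ⨅ k : ℕ, ‖(T ^ k) z‖ := le_ciInf hcon
      rw [hweak z hzK] at this
      linarith
    obtain ⟨k, hksmall⟩ := hk
    have hkey : ∀ x : X, ‖(T ^ k) x‖ ≤ (1 / 2) * ‖x‖ := by
      intro x
      by_cases hx0 : x = 0
      · simp [hx0]
      have hxpos : 0 < ‖x‖ := norm_pos_iff.2 hx0
      set c : ℝ := ε / (2 * ‖x‖) with hc
      have hcpos : 0 < c := by positivity
      set u : X := c • x with hu
      have hun : ‖u‖ = ε / 2 := by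
        rw [hu, norm_smul, Real.norm_of_nonneg hcpos.le, hc]
        field_simp
      have huball : ∀ v : X, ‖v‖ = ε / 2 → z + v ∈ K := by
        intro v hv
        apply hball
        rw [Metric.mem_ball, dist_eq_norm]
        have hzv : z + v - z = v := by abel
        rw [hzv, hv]
        linarith
      have h1 : z + u ∈ K := huball u hun
      have h2 : z + (-u) ∈ K := huball (-u) (by rw [norm_neg, hun])
      have hA : (T ^ k) u + (T ^ k) z ∈ K := by
        rw [← map_add]
        have : u + z = z + u := add_comm u z
        rw [this]; exact hTk k _ h1
      have hB : (T ^ k) z - (T ^ k) u ∈ K := by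
        rw [← map_sub]
        have : z - u = z + (-u) := sub_eq_add_neg z u
        rw [this]; exact hTk k _ h2
      have hnorm : ‖(T ^ k) u‖ ≤ C * ‖(T ^ k) z‖ := hnormal _ _ hA hB
      have hTu : ‖(T ^ k) u‖ = c * ‖(T ^ k) x‖ := by
        rw [hu, map_smul, norm_smul, Real.norm_of_nonneg hcpos.le]
      have hCz : C * ‖(T ^ k) z‖ ≤ ε / 4 := by
        have := hksmall
        rw [hδ] at this
        rw [div_mul_eq_div_div] at this
        have h5 : ‖(T ^ k) z‖ * C < ε / 4 := (lt_div_iff₀ hCpos).1 this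
        calc C * ‖(T ^ k) z‖ = ‖(T ^ k) z‖ * C := mul_comm _ _
        _ ≤ ε / 4 := h5.le
      have : c * ‖(T ^ k) x‖ ≤ ε / 4 := by rw [← hTu]; linarith
      rw [hc] at this
      rw [div_mul_eq_mul_div, div_le_iff₀ (by positivity)] at this
      have h4 : ε * ‖(T ^ k) x‖ ≤ ε / 4 * (2 * ‖x‖) := this
      nlinarith
    have hopnorm : ‖T ^ k‖ ≤ 1 / 2 :=
      ContinuousLinearMap.opNorm_le_bound _ (by norm_num) hkey
    refine ⟨⟨k, hopnorm⟩, ?_⟩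
    rcases Nat.eq_zero_or_pos k with hk0 | hkpos
    · -- k = 0 : then the identity has norm ≤ 1/2, forcing all norms 0
      rw [hk0] at hopnorm
      have hall0 : ∀ n : ℕ, ‖T ^ n‖ = 0 := by
        intro n
        have h1 : ‖T ^ n‖ ≤ ‖T ^ n‖ * ‖(T : X →L[ℝ] X) ^ 0‖ := by
          calc ‖T ^ n‖ = ‖T ^ n * T ^ 0‖ := by rw [pow_zero, mul_one]
          _ ≤ ‖T ^ n‖ * ‖(T : X →L[ℝ] X) ^ 0‖ := norm_mul_le _ _
        have := norm_nonneg (T ^ n)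
        nlinarith
      have : (fun n : ℕ => ‖T ^ n‖) = fun _ => 0 := funext hall0
      rw [this]; exact tendsto_const_nhds
    · exact aux_tendsto_of_pow_le T k hkpos hopnorm
end

section
/- Consider the operator T = 2R on ℓ∞, where R is the right shift (Rx)_0 = 0, (Rx)_{i+1} = x_i. For every diagonal operator D with entries d_i ∈ (0, M] and every nonzero x in the positive cone of ℓ∞, one has 2R(I+D)x ≱ x; nevertheless ‖(2R)^k x‖ = 2^k ‖x‖ for all k, so T is not power bounded. -/
/-- The (doubled) right shift on sequences: `(shift2 x)₀ = 0`,
`(shift2 x)_{i+1} = 2 x_i`; this is the action of `2R`. -/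
def shift2 (x : ℕ → ℝ) : ℕ → ℝ := fun n =>
  match n with
  | 0 => 0
  | Nat.succ m => 2 * x m

lemma shift2_iterate (x : ℕ → ℝ) (k : ℕ) : ∀ n,
    shift2^[k] x n = if n < k then 0 else 2 ^ k * x (n - k) := by
  induction k with
  | zero => intro n; simp
  | succ k ih =>
    intro n
    rw [Function.iterate_succ_apply']
    cases n with
    | zero => simp [shift2]
    | succ m =>
      show 2 * (shift2^[k] x m) = _
      rw [ih m]
      by_cases h : m < k
      · simp [h, Nat.succ_lt_succ h]
      · have h' : ¬ m + 1 < k + 1 := by omega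
        have h2 : m + 1 - (k + 1) = m - k := by omega
        simp only [h, h', if_false, h2, pow_succ]
        ring

/-- On `ℓ∞`, the operator `T = 2R` (right shift times two) satisfies the strong
small-gain condition `2R(I+D)x ≱ x` for every strictly positive diagonal
operator `D` with entries in `(0, M]` and every nonzero `x ≥ 0`; yet
`‖(2R)^k x‖ = 2^k ‖x‖` (sup norms), so `2R` is not power bounded. -/
theorem doubled_shift_strong_small_gain_not_power_bounded
    (M : ℝ) (hM : 0 < M)
    (d : ℕ → ℝ) (hd : ∀ i, 0 < d i ∧ d i ≤ M)
    (x : ℕ → ℝ) (hbdd : BddAbove (Set.range fun n => |x n|))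
    (hx_pos : ∀ n, 0 ≤ x n) (hx_ne : x ≠ 0) :
    (¬ ∀ n, x n ≤ shift2 (fun i => (1 + d i) * x i) n) ∧
      ∀ k : ℕ, (⨆ n, |(shift2^[k] x) n|) = 2 ^ k * ⨆ n, |x n| := by
  constructor
  · intro h
    have hzero : ∀ n, x n = 0 := by
      intro n
      induction n with
      | zero => exact le_antisymm (h 0) (hx_pos 0)
      | succ m ih =>
        have hm := h (m + 1)
        have : shift2 (fun i => (1 + d i) * x i) (m + 1) = 0 := by
          show 2 * ((1 + d m) * x m) = 0
          rw [ih]; ring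
        rw [this] at hm
        exact le_antisymm hm (hx_pos (m + 1))
    exact hx_ne (funext hzero)
  · intro k
    set S := ⨆ n, |x n| with hS
    have hle : ∀ n, |x n| ≤ S := fun n => le_ciSup hbdd n
    have hS0 : 0 ≤ S := le_trans (abs_nonneg _) (hle 0)
    have hpow : (0:ℝ) < 2 ^ k := by positivity
    have hbound : ∀ n, |shift2^[k] x n| ≤ 2 ^ k * S := by
      intro n
      rw [shift2_iterate]
      by_cases h : n < k
      · simp [h]; positivity
      · simp only [h, if_false]
        rw [abs_mul, abs_of_pos hpow]
        exact mul_le_mul_of_nonneg_left (hle _) hpow.le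
    have hbddf : BddAbove (Set.range fun n => |shift2^[k] x n|) := by
      refine ⟨2 ^ k * S, ?_⟩
      rintro y ⟨n, rfl⟩
      exact hbound n
    refine le_antisymm (ciSup_le hbound) ?_
    have hT : ∀ n, |shift2^[k] x n| ≤ ⨆ n, |shift2^[k] x n| :=
      fun n => le_ciSup hbddf n
    have key : ∀ m, |x m| ≤ (⨆ n, |shift2^[k] x n|) / 2 ^ k := by
      intro m
      rw [le_div_iff₀ hpow]
      have := hT (m + k)
      rw [shift2_iterate] at this
      have h1 : ¬ m + k < k := by omega
      have h2 : m + k - k = m := by omega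
      simp only [h1, if_false, h2, abs_mul, abs_of_pos hpow] at this
      linarith [this]
    have : S ≤ (⨆ n, |shift2^[k] x n|) / 2 ^ k := ciSup_le key
    rw [le_div_iff₀ hpow] at this
    linarith
end

section
/- Let X = C_b([0,∞)) with the supremum norm and pointwise order, and let T be the multiplication operator (Tf)(ω) = (1 − e^{−ω}) f(ω). Then T is positive, (Tf)(s) < f(s) for every nonzero f ≥ 0 and every s > 0 with f(s) > 0 — in particular Tf ≱ f for every nonzero f ≥ 0 — yet ‖T^k‖ = 1 for all k ≥ 0, so T is not uniformly exponentially stable. -/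
open Real Filter Topology BoundedContinuousFunction

/-!
Multiplication by `m` on `C_b` has operator norm `sup |m|`, and `T ^ k` is multiplication by
`m ^ k`. For `m ω = 1 - e^{-ω}` we have `0 ≤ m < 1`, which gives positivity and the strict pointwise
decrease, while `m ω → 1` as `ω → ∞` forces `‖T ^ k‖ = sup m ^ k = 1`.
-/

section MultiplicationOperator

variable {α : Type*} [TopologicalSpace α]

def IsMultiplicationOperator (T : (α →ᵇ ℝ) →L[ℝ] (α →ᵇ ℝ)) (m : α → ℝ) : Prop :=
  ∀ f x, T f x = m x * f x

namespace IsMultiplicationOperator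

variable {T : (α →ᵇ ℝ) →L[ℝ] (α →ᵇ ℝ)} {m : α → ℝ}

theorem pow (hT : IsMultiplicationOperator T m) (k : ℕ) :
    IsMultiplicationOperator (T ^ k) (m ^ k) := by
  induction k with
  | zero => intro f x; simp
  | succ k ih =>
    intro f x
    rw [pow_succ, mul_apply_eq_comp, ih, hT, Pi.pow_apply, Pi.pow_apply, pow_succ]
    ring

theorem apply_lt (hT : IsMultiplicationOperator T m) {f : α →ᵇ ℝ} {x : α} (hm : m x < 1)
    (hf : 0 < f x) : T f x < f x := by
  rw [hT]
  exact mul_lt_of_lt_one_left hf hm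

theorem opNorm_le {C : ℝ} (hT : IsMultiplicationOperator T m) (hC : 0 ≤ C)
    (hm : ∀ x, |m x| ≤ C) : ‖T‖ ≤ C := by
  refine T.opNorm_le_bound hC fun f => (norm_le (by positivity)).mpr fun x => ?_
  rw [hT, norm_mul]
  exact mul_le_mul (hm x) (norm_coe_le_norm f x) (norm_nonneg _) hC

theorem abs_le_opNorm (hT : IsMultiplicationOperator T m) (x : α) : |m x| ≤ ‖T‖ :=
  calc |m x| = ‖T (const α 1) x‖ := by rw [hT, const_apply, mul_one, Real.norm_eq_abs]
    _ ≤ ‖T (const α 1)‖ := norm_coe_le_norm _ x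
    _ ≤ ‖T‖ * ‖const α (1 : ℝ)‖ := T.le_opNorm _
    _ ≤ ‖T‖ * 1 := by
      gcongr
      exact (norm_const_le _).trans norm_one.le
    _ = ‖T‖ := mul_one _

end IsMultiplicationOperator

end MultiplicationOperator

theorem tendsto_one_sub_exp_neg_atTop : Tendsto (fun x : ℝ => 1 - exp (-x)) atTop (𝓝 1) := by
  simpa using tendsto_exp_neg_atTop_nhds_zero.const_sub 1

theorem one_sub_exp_neg_nonneg {x : ℝ} (hx : 0 ≤ x) : 0 ≤ 1 - exp (-x) :=
  sub_nonneg.mpr (exp_le_one_iff.mpr (neg_nonpos.mpr hx))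

theorem one_sub_exp_neg_lt_one (x : ℝ) : 1 - exp (-x) < 1 :=
  sub_lt_self 1 (exp_pos _)

/-- On `X = C_b([0,∞))`, the multiplication operator
`(Tf)(ω) = (1 − e^{−ω}) f(ω)` is positive, satisfies `(Tf)(s) < f(s)` whenever
`f ≥ 0` and `f(s) > 0` with `s > 0`, hence `Tf ≱ f` for every nonzero `f ≥ 0`,
but `‖T^k‖ = 1` for every `k`, so `T` is not uniformly exponentially stable. -/
theorem multiplication_operator_small_gain_not_stable
    (T : BoundedContinuousFunction (Set.Ici (0 : ℝ)) ℝ →L[ℝ]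
         BoundedContinuousFunction (Set.Ici (0 : ℝ)) ℝ)
    (hT : ∀ (f : BoundedContinuousFunction (Set.Ici (0 : ℝ)) ℝ)
        (ω : Set.Ici (0 : ℝ)), T f ω = (1 - exp (-ω.val)) * f ω) :
    (∀ f : BoundedContinuousFunction (Set.Ici (0 : ℝ)) ℝ,
        (∀ ω, 0 ≤ f ω) → ∀ ω, 0 ≤ T f ω) ∧
    (∀ f : BoundedContinuousFunction (Set.Ici (0 : ℝ)) ℝ,
        (∀ ω, 0 ≤ f ω) → ∀ s : Set.Ici (0 : ℝ), 0 < s.val → 0 < f s →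
          T f s < f s) ∧
    (∀ f : BoundedContinuousFunction (Set.Ici (0 : ℝ)) ℝ,
        (∀ ω, 0 ≤ f ω) → f ≠ 0 → ¬ ∀ ω, f ω ≤ T f ω) ∧
    (∀ k : ℕ, ‖T ^ k‖ = 1) := by
  have hm_nonneg (ω : Set.Ici (0 : ℝ)) : 0 ≤ 1 - exp (-ω.val) := one_sub_exp_neg_nonneg ω.2
  have hm_lt (ω : Set.Ici (0 : ℝ)) : 1 - exp (-ω.val) < 1 := one_sub_exp_neg_lt_one _
  have hTm : IsMultiplicationOperator T fun ω => 1 - exp (-ω.val) := hT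
  refine ⟨fun f hf ω => ?_, fun f _ s _ hfs => hTm.apply_lt (hm_lt s) hfs,
    fun f hf hne hle => ?_, fun k => ?_⟩
  · rw [hT]
    exact mul_nonneg (hm_nonneg ω) (hf ω)
  · obtain ⟨ω, hω⟩ : ∃ ω, f ω ≠ 0 := by
      by_contra! h
      exact hne (ext h)
    exact (hle ω).not_gt (hTm.apply_lt (hm_lt ω) ((hf ω).lt_of_ne' hω))
  · have hTk := hTm.pow k
    refine le_antisymm (hTk.opNorm_le zero_le_one fun ω => ?_) ?_
    · rw [Pi.pow_apply, abs_pow, abs_of_nonneg (hm_nonneg ω)]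
      exact pow_le_one₀ (hm_nonneg ω) (hm_lt ω).le
    · have hlim : Tendsto (fun n : ℕ => (1 - exp (-(n : ℝ))) ^ k) atTop (𝓝 1) := by
        simpa using (tendsto_one_sub_exp_neg_atTop.comp tendsto_natCast_atTop_atTop).pow k
      refine le_of_tendsto' hlim fun n => le_trans (le_abs_self _) ?_
      exact hTk.abs_le_opNorm ⟨n, Set.mem_Ici.mpr n.cast_nonneg⟩
end
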